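/- For every rational q, the relative orthogonal complement (S_q⁺ × N_q) ⊓ (S_q⁻ × N_q)ᗮ in the Hilbert space direct sum H ⊕ K is one-dimensional, spanned by the vector (e_q, 0). (The nest isomorphism θ preserves the one-dimensional atoms of the nests.) -/
import Mathlib


open MeasureTheory

/-- The closed subspace of `L²(ν)` of functions vanishing `ν`-a.e. on the set `s`. -/
noncomputable def vanishOn (ν : Measure ℝ) (s : Set ℝ) : Submodule ℂ (Lp ℂ 2 ν) where
  carrier := {f | (f : ℝ → ℂ) =ᵐ[ν.restrict s] 0}
  add_mem' := by
    intro f g hf hg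
    filter_upwards [hf, hg, ae_restrict_of_ae (Lp.coeFn_add f g)] with x hfx hgx hx
    show (↑↑(f + g) : ℝ → ℂ) x = 0
    rw [hx]
    simp only [Pi.add_apply]
    simp [hfx, hgx]
  zero_mem' := by
    filter_upwards [ae_restrict_of_ae (Lp.coeFn_zero ℂ 2 ν)] with x hx
    show (↑↑(0 : Lp ℂ 2 ν) : ℝ → ℂ) x = 0
    simpa using hx
  smul_mem' := by
    intro c f hf
    filter_upwards [hf, ae_restrict_of_ae (Lp.coeFn_smul c f)] with x hfx hx
    show (↑↑(c • f) : ℝ → ℂ) x = 0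
    rw [hx]
    simp [hfx]

/-- The measure `μ = ∑_{q ∈ ℚ} δ_q` on the Borel σ-algebra of `ℝ`. -/
noncomputable def mu : Measure ℝ := Measure.sum fun q : ℚ => Measure.dirac (q : ℝ)

lemma mu_singleton_ne_top (x : ℝ) : mu {x} ≠ ⊤ := by
  have h : mu {x} = ∑' q : ℚ, Measure.dirac (q : ℝ) {x} :=
    Measure.sum_apply _ (measurableSet_singleton x)
  rw [h]
  by_cases hx : ∃ q : ℚ, (q : ℝ) = x
  · obtain ⟨q₀, hq₀⟩ := hx
    have hs : ∀ q : ℚ, q ≠ q₀ → Measure.dirac (q : ℝ) {x} = 0 := by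
      intro q hq
      rw [Measure.dirac_apply]
      have : (q : ℝ) ≠ x := by
        intro h'
        exact hq (by exact_mod_cast hq₀ ▸ h')
      simp [Set.indicator, this]
    rw [tsum_eq_single q₀ hs, Measure.dirac_apply]
    simp [Set.indicator, hq₀]
  · have hs : ∀ q : ℚ, Measure.dirac (q : ℝ) {x} = 0 := by
      intro q
      rw [Measure.dirac_apply]
      have : (q : ℝ) ≠ x := fun h' => hx ⟨q, h'⟩
      simp [Set.indicator, this]
    simp [hs]

/-- `e q` is the indicator function of the singleton `{q}` as an element of `H = L²(ℝ, μ)`. -/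
noncomputable def e (q : ℚ) : Lp ℂ 2 mu :=
  indicatorConstLp 2 (measurableSet_singleton (q : ℝ)) (mu_singleton_ne_top _) (1 : ℂ)

/-- The subspace `S_t⁺ = {f ∈ L²(μ) : f = 0 μ-a.e. on (t, ∞)}`. -/
noncomputable def Splus (t : ℝ) : Submodule ℂ (Lp ℂ 2 mu) := vanishOn mu (Set.Ioi t)

/-- The subspace `S_t⁻ = {f ∈ L²(μ) : f = 0 μ-a.e. on [t, ∞)}`. -/
noncomputable def Sminus (t : ℝ) : Submodule ℂ (Lp ℂ 2 mu) := vanishOn mu (Set.Ici t)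

/-- The subspace `N_t = {f ∈ L²(λ) : f = 0 λ-a.e. on (t, ∞)}` of `K = L²(ℝ, λ)`,
where `λ` is Lebesgue measure. -/
noncomputable def Nt (t : ℝ) : Submodule ℂ (Lp ℂ 2 (volume : Measure ℝ)) :=
  vanishOn volume (Set.Ioi t)

/-- The closed subspace `S × N` of the Hilbert space direct sum `H ⊕ K`
(`H ⊕ K` is realized as `WithLp 2 (H × K)`). -/
noncomputable def prodSub (p : Submodule ℂ (Lp ℂ 2 mu))
    (n : Submodule ℂ (Lp ℂ 2 (volume : Measure ℝ))) :
    Submodule ℂ (WithLp 2 (Lp ℂ 2 mu × Lp ℂ 2 (volume : Measure ℝ))) :=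
  Submodule.map (WithLp.linearEquiv 2 ℂ _).symm.toLinearMap (p.prod n)

lemma mu_singleton_rat (q : ℚ) : mu {(q:ℝ)} = 1 := by
  have h : mu {(q:ℝ)} = ∑' r : ℚ, Measure.dirac (r : ℝ) {(q:ℝ)} :=
    Measure.sum_apply _ (measurableSet_singleton _)
  rw [h, tsum_eq_single q]
  · simp
  · intro r hr
    rw [Measure.dirac_apply]
    have : (r : ℝ) ≠ q := by exact_mod_cast hr
    simp [Set.indicator, this]

lemma mu_restrict_singleton (q : ℚ) : mu.restrict {(q:ℝ)} = Measure.dirac (q:ℝ) := by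
  rw [Measure.restrict_singleton, mu_singleton_rat, one_smul]

lemma val_at_q {q : ℚ} {f : ℝ → ℂ} (h : f =ᵐ[mu.restrict {(q:ℝ)}] 0) : f q = 0 := by
  rw [mu_restrict_singleton, MeasureTheory.ae_dirac_eq] at h
  exact h

lemma inner_e (q : ℚ) (f : Lp ℂ 2 mu) : @inner ℂ _ _ (e q) f = (f : ℝ → ℂ) q := by
  rw [e, L2.inner_indicatorConstLp_one (measurableSet_singleton _) (mu_singleton_ne_top _) f]
  rw [show (mu.restrict {(q:ℝ)}) = Measure.dirac (q:ℝ) from mu_restrict_singleton q]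
  exact integral_dirac _ _

lemma e_apply (q : ℚ) : (e q : ℝ → ℂ) q = 1 := by
  have h := ae_restrict_of_ae (μ := mu) (s := {(q:ℝ)})
    (indicatorConstLp_coeFn (p := 2) (hs := measurableSet_singleton (q:ℝ))
      (hμs := mu_singleton_ne_top _) (c := (1:ℂ)))
  rw [mu_restrict_singleton, MeasureTheory.ae_dirac_eq] at h
  have : (e q : ℝ → ℂ) q = Set.indicator {(q:ℝ)} (fun _ => (1:ℂ)) q := h
  simp [this]

lemma mem_vanishOn {ν : Measure ℝ} {s : Set ℝ} {f : Lp ℂ 2 ν} :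
    f ∈ vanishOn ν s ↔ (f : ℝ → ℂ) =ᵐ[ν.restrict s] 0 := Iff.rfl

lemma mem_prodSub {p : Submodule ℂ (Lp ℂ 2 mu)}
    {n : Submodule ℂ (Lp ℂ 2 (volume : Measure ℝ))}
    {x : WithLp 2 (Lp ℂ 2 mu × Lp ℂ 2 (volume : Measure ℝ))} :
    x ∈ prodSub p n ↔
      (WithLp.equiv 2 _ x).1 ∈ p ∧ (WithLp.equiv 2 _ x).2 ∈ n := by
  rw [prodSub]
  rw [Submodule.mem_map_equiv]
  exact Submodule.mem_prod

lemma e_mem_Splus (q : ℚ) : e q ∈ Splus (q : ℝ) := by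
  rw [Splus, mem_vanishOn]
  have h1 : (e q : ℝ → ℂ) =ᵐ[mu] Set.indicator {(q:ℝ)} (fun _ => (1:ℂ)) :=
    indicatorConstLp_coeFn
  filter_upwards [ae_restrict_of_ae h1, ae_restrict_mem measurableSet_Ioi] with x hx hmem
  rw [hx, Set.indicator_of_notMem]
  · rfl
  · intro hq
    rw [Set.mem_singleton_iff] at hq
    rw [Set.mem_Ioi, hq] at hmem
    exact lt_irrefl _ hmem

lemma sminus_at_q {q : ℚ} {f : Lp ℂ 2 mu} (hf : f ∈ Sminus (q:ℝ)) : (f : ℝ → ℂ) q = 0 :=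
  val_at_q (ae_restrict_of_ae_restrict_of_subset
    (Set.singleton_subset_iff.2 Set.self_mem_Ici) hf)

lemma ae_at_q {q : ℚ} {f g : ℝ → ℂ} (h : f =ᵐ[mu] g) : f q = g q := by
  have h2 := ae_restrict_of_ae (s := {(q:ℝ)}) h
  rw [mu_restrict_singleton, MeasureTheory.ae_dirac_eq] at h2
  exact h2


/-- For every rational `q`, the relative orthogonal complement
`(S_q⁺ × N_q) ⊓ (S_q⁻ × N_q)ᗮ` in `H ⊕ K` is one-dimensional, spanned by `(e_q, 0)`. -/
theorem atom_of_nest_two (q : ℚ) :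
    ((WithLp.equiv 2 (Lp ℂ 2 mu × Lp ℂ 2 (volume : Measure ℝ))).symm
        (e q, 0) ≠ 0) ∧
    prodSub (Splus (q : ℝ)) (Nt (q : ℝ)) ⊓ (prodSub (Sminus (q : ℝ)) (Nt (q : ℝ)))ᗮ =
      Submodule.span ℂ
        {(WithLp.equiv 2 (Lp ℂ 2 mu × Lp ℂ 2 (volume : Measure ℝ))).symm (e q, 0)} ∧
    Module.finrank ℂ
        ↥(prodSub (Splus (q : ℝ)) (Nt (q : ℝ)) ⊓
            (prodSub (Sminus (q : ℝ)) (Nt (q : ℝ)))ᗮ) = 1 := by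
  set veq := (WithLp.equiv 2 (Lp ℂ 2 mu × Lp ℂ 2 (volume : Measure ℝ))).symm (e q, 0)
    with hveq
  -- e q is nonzero
  have hinner_ee : @inner ℂ _ _ (e q) (e q) = 1 := by rw [inner_e, e_apply]
  have heq : e q ≠ 0 := by
    intro h
    rw [h, inner_zero_left] at hinner_ee
    exact zero_ne_one hinner_ee
  have hv : veq ≠ 0 := by
    intro h
    apply heq
    have h2 := congrArg (fun v => ((WithLp.equiv 2 (Lp ℂ 2 mu × Lp ℂ 2 (volume : Measure ℝ))) v).1) h
    simpa [hveq] using h2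
  -- veq belongs to the relative complement
  have hveqP : veq ∈ prodSub (Splus (q : ℝ)) (Nt (q : ℝ)) := by
    rw [mem_prodSub]
    constructor
    · simpa [hveq] using e_mem_Splus q
    · simp [hveq]
  have hveqO : veq ∈ (prodSub (Sminus (q : ℝ)) (Nt (q : ℝ)))ᗮ := by
    rw [Submodule.mem_orthogonal]
    intro u hu
    obtain ⟨hu1, hu2⟩ := mem_prodSub.1 hu
    have : @inner ℂ _ _ u veq =
        @inner ℂ _ _ (WithLp.equiv 2 _ u).1 (e q) + @inner ℂ _ _ (WithLp.equiv 2 _ u).2 (0 : Lp ℂ 2 (volume : Measure ℝ)) := by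
      rw [WithLp.prod_inner_apply]
      rfl
    rw [this, inner_zero_right, add_zero, ← inner_conj_symm, inner_e,
      sminus_at_q hu1, map_zero]
  -- the main equality
  have hmain : prodSub (Splus (q : ℝ)) (Nt (q : ℝ)) ⊓ (prodSub (Sminus (q : ℝ)) (Nt (q : ℝ)))ᗮ =
      Submodule.span ℂ {veq} := by
    apply le_antisymm
    · intro x hx
      obtain ⟨hxP, hxO⟩ := Submodule.mem_inf.1 hx
      obtain ⟨hx1, hx2⟩ := mem_prodSub.1 hxP
      set x1 := (WithLp.equiv 2 _ x).1 with hx1def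
      set x2 := (WithLp.equiv 2 _ x).2 with hx2def
      set c := (x1 : ℝ → ℂ) q with hc
      set m := x - c • veq with hm
      have hm1 : (WithLp.equiv 2 _ m).1 = x1 - c • e q := by
        simp [hm, hveq, hx1def]
      have hm2 : (WithLp.equiv 2 _ m).2 = x2 := by
        simp [hm, hveq, hx2def]
      -- value of m's first component at q is 0
      have hval : ((x1 - c • e q : Lp ℂ 2 mu) : ℝ → ℂ) q = 0 := by
        have h1 : ((x1 - c • e q : Lp ℂ 2 mu) : ℝ → ℂ) q = (x1 : ℝ → ℂ) q - ((c • e q : Lp ℂ 2 mu) : ℝ → ℂ) q :=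
          ae_at_q (Lp.coeFn_sub x1 (c • e q))
        have h2 : ((c • e q : Lp ℂ 2 mu) : ℝ → ℂ) q = c * (e q : ℝ → ℂ) q :=
          ae_at_q (Lp.coeFn_smul c (e q))
        rw [h1, h2, e_apply, mul_one, ← hc, sub_self]
      have hmmem : m ∈ prodSub (Sminus (q : ℝ)) (Nt (q : ℝ)) := by
        rw [mem_prodSub, hm1, hm2]
        refine ⟨?_, hx2⟩
        rw [Sminus, mem_vanishOn]
        rw [show Set.Ici (q:ℝ) = Set.Ioi (q:ℝ) ∪ {(q:ℝ)} from (Set.Ioi_union_left).symm]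
        rw [Filter.EventuallyEq, ae_restrict_union_iff]
        constructor
        · filter_upwards [ae_restrict_of_ae (Lp.coeFn_sub x1 (c • e q)),
            ae_restrict_of_ae (Lp.coeFn_smul c (e q)), hx1, e_mem_Splus q] with y hy hsy hy1 hey
          rw [hy]
          simp only [Pi.sub_apply, Pi.zero_apply]
          rw [hsy]
          simp only [Pi.smul_apply, smul_eq_mul]
          rw [hy1, hey]
          simp
        · rw [mu_restrict_singleton, MeasureTheory.ae_dirac_eq]
          exact Filter.eventually_pure.2 hval
      -- orthogonality forces m = 0
      have horth : @inner ℂ _ _ m x = 0 := (Submodule.mem_orthogonal _ _).1 hxO m hmmem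
      have hxeq : x = m + c • veq := by rw [hm]; abel
      have hmv : @inner ℂ _ _ m veq = 0 := by
        have : @inner ℂ _ _ m veq =
            @inner ℂ _ _ (WithLp.equiv 2 _ m).1 (e q) +
            @inner ℂ _ _ (WithLp.equiv 2 _ m).2 (0 : Lp ℂ 2 (volume : Measure ℝ)) := by
          rw [WithLp.prod_inner_apply]; rfl
        rw [this, inner_zero_right, add_zero, hm1, ← inner_conj_symm, inner_e, hval, map_zero]
      have hmm : @inner ℂ _ _ m m = 0 := by
        calc @inner ℂ _ _ m m = @inner ℂ _ _ m x - c * @inner ℂ _ _ m veq := by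
              rw [hxeq, inner_add_right, inner_smul_right]; ring
          _ = 0 := by rw [horth, hmv]; ring
      have hm0 : m = 0 := inner_self_eq_zero.1 hmm
      have : x = c • veq := by rw [hxeq, hm0, zero_add]
      exact Submodule.mem_span_singleton.2 ⟨c, this.symm⟩
    · rw [Submodule.span_singleton_le_iff_mem]
      exact Submodule.mem_inf.2 ⟨hveqP, hveqO⟩
  refine ⟨hv, hmain, ?_⟩
  rw [hmain]
  exact finrank_span_singleton hv
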